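/- arXiv:2107.07350 — 2 statements merged into one kernel-verified Lean document; each statement's English description precedes it below -/
import Mathlib

section
/- Characterisation of completions in the 2-serrated case: a function K : I × I → ℝ is a completion of a partial covariance K_Ω on Ω = (I₁×I₁) ∪ (I₂×I₂) if and only if K = K⋆ + C, where K⋆ is the canonical completion, C vanishes on I₁² ∪ I₂², and the function L on [(I₁∖I₂) ∪ (I₂∖I₁)]² defined by L = K_{I₁}/K_J on (I₁∖I₂)², L = K_{I₂}/K_J on (I₂∖I₁)², and L = C on the two off-diagonal rectangles, is itself a covariance kernel. -/
open Set MeasureTheory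
open scoped RealInnerProductSpace Classical

noncomputable section

/-- `K` is a covariance kernel on the set `S`: symmetric and positive semidefinite. -/
def IsCovOn {I : Type*} (S : Set I) (K : I → I → ℝ) : Prop :=
  (∀ s ∈ S, ∀ t ∈ S, K s t = K t s) ∧
  ∀ (n : ℕ) (t : Fin n → I), (∀ i, t i ∈ S) → ∀ c : Fin n → ℝ,
    0 ≤ ∑ i, ∑ j, c i * c j * K (t i) (t j)

/-- `Ω` is a symmetric domain containing the diagonal. -/
def IsSymmDomain {I : Type*} (Ω : Set (I × I)) : Prop :=
  (∀ s t : I, (s, t) ∈ Ω ↔ (t, s) ∈ Ω) ∧ ∀ t : I, (t, t) ∈ Ω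

/-- `K` is a partial covariance on `Ω`: each square inside `Ω` carries a covariance. -/
def IsPartialCov {I : Type*} (Ω : Set (I × I)) (K : I → I → ℝ) : Prop :=
  ∀ J : Set I, J ×ˢ J ⊆ Ω → IsCovOn J K

/-- `K` is a covariance-kernel completion of `KΩ` from the domain `Ω`. -/
def IsCompletion {I : Type*} (Ω : Set (I × I)) (KΩ K : I → I → ℝ) : Prop :=
  IsCovOn (univ : Set I) K ∧ ∀ p ∈ Ω, K p.1 p.2 = KΩ p.1 p.2

/-- `a ∈ H` represents the function `f : J → ℝ` in the (abstract realization via the feature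
map `φ` of the) RKHS of the kernel realized by `φ`: `a` lies in the closed span of the
features and the reproducing formula `f u = ⟪a, φ u⟫` holds. -/
def RepIn {J : Type*} {H : Type*} [NormedAddCommGroup H] [InnerProductSpace ℝ H]
    (φ : J → H) (a : H) (f : J → ℝ) : Prop :=
  a ∈ closure ((Submodule.span ℝ (Set.range φ) : Submodule ℝ H) : Set H) ∧
  ∀ u : J, f u = ⟪a, φ u⟫

/-!
Let `a s` represent `K_Ω(s, ·)|_J` in the feature space of `K_J`, so that `⟪a s, a t⟫` is the
canonical completion off `Ω`. For any `K` agreeing with `K_Ω` on `Ω`, the Schur complement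
`K(s, t) - ⟪a s, a t⟫` vanishes as soon as `s` or `t` lies in `J`, and on the symmetric
difference it is exactly the kernel `L` built from `C = K - K⋆`. Hence `K` is a completion iff
this Schur complement is positive semidefinite, i.e. iff `L` is. Positivity of the Schur complement
of a positive kernel follows by approximating `∑ cᵢ a(tᵢ)` with finite combinations of features,
which turns `‖∑ cᵢ a(tᵢ)‖² ≤ ∑ cᵢ cⱼ K(tᵢ, tⱼ)` into positivity of `K` at finitely many points;
conversely `K` is the Gram kernel of `a` plus `L` extended by zero.
-/

section

variable {I : Type*}

section InnerProduct

variable {H : Type*} [NormedAddCommGroup H] [InnerProductSpace ℝ H]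

lemma sum_sum_mul_inner {n m : ℕ} (c : Fin n → ℝ) (d : Fin m → ℝ) (x : Fin n → H)
    (y : Fin m → H) :
    ∑ i, ∑ j, c i * d j * ⟪x i, y j⟫ = ⟪∑ i, c i • x i, ∑ j, d j • y j⟫ := by
  rw [sum_inner]
  simp only [inner_sum, real_inner_smul_left, real_inner_smul_right]
  exact Finset.sum_congr rfl fun _ _ => Finset.sum_congr rfl fun _ _ => by ring

lemma sum_sum_mul_inner_self {n : ℕ} (c : Fin n → ℝ) (x : Fin n → H) :
    ∑ i, ∑ j, c i * c j * ⟪x i, x j⟫ = ‖∑ i, c i • x i‖ ^ 2 := by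
  rw [sum_sum_mul_inner, real_inner_self_eq_norm_sq]

lemma inner_eq_of_mem_closure_span {J : Type*} {φ : J → H} {x x' y : H}
    (hxx' : ∀ v, ⟪x, φ v⟫ = ⟪x', φ v⟫)
    (hy : y ∈ closure (Submodule.span ℝ (range φ) : Set H)) :
    ⟪x, y⟫ = ⟪x', y⟫ := by
  have hspan : (Submodule.span ℝ (range φ) : Set H) ⊆ (ℝ ∙ (x - x'))ᗮ :=
    Submodule.span_le.mpr <| range_subset_iff.mpr fun v => by
      rw [SetLike.mem_coe, Submodule.mem_orthogonal_singleton_iff_inner_right, inner_sub_left,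
        hxx', sub_self]
  have := closure_minimal hspan (Submodule.isClosed_orthogonal _) hy
  rwa [SetLike.mem_coe, Submodule.mem_orthogonal_singleton_iff_inner_right, inner_sub_left,
    sub_eq_zero] at this

end InnerProduct

lemma sum_sum_fin_append {n m : ℕ} (K : I → I → ℝ) (c : Fin n → ℝ) (d : Fin m → ℝ)
    (t : Fin n → I) (u : Fin m → I) (hK : ∀ i j, K (u i) (t j) = K (t j) (u i)) :
    ∑ i, ∑ j, Fin.append c d i * Fin.append c d j * K (Fin.append t u i) (Fin.append t u j) =
      ∑ i, ∑ j, c i * c j * K (t i) (t j) + 2 * ∑ i, ∑ j, c i * d j * K (t i) (u j) +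
        ∑ i, ∑ j, d i * d j * K (u i) (u j) := by
  have hswap : ∑ i, ∑ j, d i * c j * K (u i) (t j) = ∑ i, ∑ j, c i * d j * K (t i) (u j) := by
    rw [Finset.sum_comm]
    simp only [hK, mul_comm (d _)]
  simp only [Fin.sum_univ_add, Fin.append_left, Fin.append_right, Finset.sum_add_distrib, hswap]
  ring

namespace IsCovOn

variable {S T : Set I} {K K' : I → I → ℝ}

lemma mono (hK : IsCovOn S K) (hTS : T ⊆ S) : IsCovOn T K :=
  ⟨fun s hs t ht => hK.1 s (hTS hs) t (hTS ht), fun n t ht => hK.2 n t fun i => hTS (ht i)⟩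

lemma congr (hK : IsCovOn S K) (hKK' : ∀ s ∈ S, ∀ t ∈ S, K s t = K' s t) : IsCovOn S K' := by
  refine ⟨fun s hs t ht => ?_, fun n t ht c => ?_⟩
  · rw [← hKK' s hs t ht, ← hKK' t ht s hs, hK.1 s hs t ht]
  · simpa only [hKK' _ (ht _) _ (ht _)] using hK.2 n t ht c

lemma add (hK : IsCovOn S K) (hK' : IsCovOn S K') : IsCovOn S (fun s t => K s t + K' s t) := by
  refine ⟨fun s hs t ht => ?_, fun n t ht c => ?_⟩
  · simp only [hK.1 s hs t ht, hK'.1 s hs t ht]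
  simpa only [mul_add, Finset.sum_add_distrib] using add_nonneg (hK.2 n t ht c) (hK'.2 n t ht c)

lemma extend_by_zero (hK : IsCovOn S K) :
    IsCovOn univ (fun s t => if s ∈ S ∧ t ∈ S then K s t else 0) := by
  refine ⟨fun s _ t _ => ?_, fun n t _ c => ?_⟩
  · by_cases h : s ∈ S ∧ t ∈ S
    · simp only [if_pos h, if_pos h.symm, hK.1 s h.1 t h.2]
    · simp only [if_neg h, if_neg (mt And.symm h)]
  rcases S.eq_empty_or_nonempty with rfl | ⟨s₀, hs₀⟩
  · simp
  let t' i := if t i ∈ S then t i else s₀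
  let c' i := if t i ∈ S then c i else 0
  have ht' : ∀ i, t' i ∈ S := fun i => by by_cases hi : t i ∈ S <;> simp [t', hi, hs₀]
  convert hK.2 n t' ht' c' using 3 with i _ j _
  by_cases hi : t i ∈ S <;> by_cases hj : t j ∈ S <;> simp [t', c', hi, hj]

end IsCovOn

lemma isCovOn_inner {H : Type*} [NormedAddCommGroup H] [InnerProductSpace ℝ H]
    (S : Set I) (a : I → H) : IsCovOn S (fun s t => ⟪a s, a t⟫) :=
  ⟨fun _ _ _ _ => real_inner_comm _ _, fun n t _ c => by
    rw [sum_sum_mul_inner_self]; positivity⟩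

theorem IsCovOn.sub_inner_of_rep {J H : Type*} [NormedAddCommGroup H] [InnerProductSpace ℝ H]
    {S : Set I} {K : I → I → ℝ} (hK : IsCovOn S K) {e : J → I} (he : ∀ u, e u ∈ S)
    {φ : J → H} {a : I → H} (ha : ∀ s ∈ S, a s ∈ closure (Submodule.span ℝ (range φ) : Set H))
    (hrep : ∀ s ∈ S, ∀ u, K s (e u) = ⟪a s, φ u⟫) (hφ : ∀ u v, K (e u) (e v) = ⟪φ u, φ v⟫) :
    IsCovOn S (fun s t => K s t - ⟪a s, a t⟫) := by
  refine ⟨fun s hs t ht => by simp only [hK.1 s hs t ht, real_inner_comm], fun n t ht c => ?_⟩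
  set Q := ∑ i, ∑ j, c i * c j * K (t i) (t j)
  set v := ∑ i, c i • a (t i)
  -- For `w = ∑ d j • φ (u j)`, this is the quadratic form of `K` at `t ++ e ∘ u` with
  -- coefficients `c ++ (-d)`.
  have hspan : ∀ w ∈ Submodule.span ℝ (range φ), 0 ≤ Q - 2 * ⟪v, w⟫ + ‖w‖ ^ 2 := by
    intro w hw
    obtain ⟨m, d, g, rfl⟩ := Submodule.mem_span_set'.mp hw
    choose u hu using fun j => (g j).2
    have hcross : ⟪v, ∑ j, d j • (g j : H)⟫ = ∑ i, ∑ j, c i * d j * K (t i) (e (u j)) := by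
      simp only [v, ← hu, ← sum_sum_mul_inner, hrep _ (ht _)]
    have hnorm : ‖∑ j, d j • (g j : H)‖ ^ 2 = ∑ i, ∑ j, d i * d j * K (e (u i)) (e (u j)) := by
      simp only [← hu, ← sum_sum_mul_inner_self, hφ]
    have hpsd := hK.2 (n + m) (Fin.append t (e ∘ u))
      (fun i => by refine Fin.addCases (fun i => ?_) (fun j => ?_) i <;> simp [ht, he])
      (Fin.append c (-d))
    rw [sum_sum_fin_append K c (-d) t (e ∘ u) fun i j => hK.1 _ (he _) _ (ht j)] at hpsd
    simp only [Function.comp_apply, Pi.neg_apply, mul_neg, neg_mul, neg_neg,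
      Finset.sum_neg_distrib] at hpsd
    linarith
  have hv : v ∈ closure (Submodule.span ℝ (range φ) : Set H) := by
    rw [← Submodule.topologicalClosure_coe]
    exact Submodule.sum_mem _ fun i _ => Submodule.smul_mem _ _ <| by
      rw [SetLike.mem_coe.symm, Submodule.topologicalClosure_coe]; exact ha _ (ht i)
  have hQv : 0 ≤ Q - 2 * ⟪v, v⟫ + ‖v‖ ^ 2 :=
    closure_minimal (t := {w | 0 ≤ Q - 2 * ⟪v, w⟫ + ‖w‖ ^ 2}) hspan
      (isClosed_le continuous_const (by fun_prop)) hv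
  rw [real_inner_self_eq_norm_sq] at hQv
  simp only [mul_sub, Finset.sum_sub_distrib, sum_sum_mul_inner_self]
  linarith

section TwoSerrated

variable {I₁ I₂ : Set I}

lemma mem_inter_of_notMem_symmDiff (hcover : I₁ ∪ I₂ = univ) {s : I}
    (hs : s ∉ I₁ \ I₂ ∪ I₂ \ I₁) : s ∈ I₁ ∩ I₂ := by
  have : s ∈ I₁ ∪ I₂ := hcover ▸ mem_univ s
  simp only [mem_union, mem_sdiff] at hs this
  tauto

lemma mem_serrated_of_mem_inter (hcover : I₁ ∪ I₂ = univ) (s : I) {u : I}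
    (hu : u ∈ I₁ ∩ I₂) : (s, u) ∈ I₁ ×ˢ I₁ ∪ I₂ ×ˢ I₂ := by
  have : s ∈ I₁ ∪ I₂ := hcover ▸ mem_univ s
  rcases this with hs | hs
  exacts [Or.inl ⟨hs, hu.1⟩, Or.inr ⟨hs, hu.2⟩]

lemma mem_serrated_iff_of_mem_symmDiff {s t : I} (hs : s ∈ I₁ \ I₂ ∪ I₂ \ I₁)
    (ht : t ∈ I₁ \ I₂ ∪ I₂ \ I₁) :
    (s, t) ∈ I₁ ×ˢ I₁ ∪ I₂ ×ˢ I₂ ↔ (s ∈ I₁ \ I₂ ∧ t ∈ I₁ \ I₂) ∨ (s ∈ I₂ \ I₁ ∧ t ∈ I₂ \ I₁) := by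
  simp only [mem_union, mem_prod, mem_sdiff] at *
  tauto

lemma IsPartialCov.symm_of_mem_serrated {KΩ : I → I → ℝ}
    (hpc : IsPartialCov (I₁ ×ˢ I₁ ∪ I₂ ×ˢ I₂) KΩ) {s t : I} (hst : (s, t) ∈ I₁ ×ˢ I₁ ∪ I₂ ×ˢ I₂) :
    KΩ s t = KΩ t s := by
  rcases hst with ⟨hs, ht⟩ | ⟨hs, ht⟩
  exacts [(hpc I₁ subset_union_left).1 s hs t ht, (hpc I₂ subset_union_right).1 s hs t ht]

variable {KΩ : I → I → ℝ} {H : Type*} [NormedAddCommGroup H] [InnerProductSpace ℝ H]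
  {φ : ↥(I₁ ∩ I₂) → H} {a : I → H}

lemma inner_eq_of_mem_inter (hφ : ∀ u v : ↥(I₁ ∩ I₂), KΩ u.1 v.1 = ⟪φ u, φ v⟫)
    (ha : ∀ s : I, RepIn φ (a s) (fun u : ↥(I₁ ∩ I₂) => KΩ s u.1)) (s : I) (u : ↥(I₁ ∩ I₂)) :
    ⟪a s, a u⟫ = KΩ s u := by
  rw [real_inner_comm, inner_eq_of_mem_closure_span (fun v => ((ha u).2 v).symm.trans (hφ u v))
    (ha s).1, real_inner_comm]
  exact ((ha s).2 u).symm

lemma ite_diagBlocks_eq_sub_inner {K C : I → I → ℝ}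
    (hKC : ∀ s t, K s t =
      (if (s, t) ∈ I₁ ×ˢ I₁ ∪ I₂ ×ˢ I₂ then KΩ s t else ⟪a s, a t⟫) + C s t)
    (hC : ∀ s t, (s ∈ I₁ ∧ t ∈ I₁) ∨ (s ∈ I₂ ∧ t ∈ I₂) → C s t = 0) {s t : I}
    (hs : s ∈ I₁ \ I₂ ∪ I₂ \ I₁) (ht : t ∈ I₁ \ I₂ ∪ I₂ \ I₁) :
    (if (s ∈ I₁ \ I₂ ∧ t ∈ I₁ \ I₂) ∨ (s ∈ I₂ \ I₁ ∧ t ∈ I₂ \ I₁)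
      then KΩ s t - ⟪a s, a t⟫ else C s t) = K s t - ⟪a s, a t⟫ := by
  have hΩ := mem_serrated_iff_of_mem_symmDiff hs ht
  by_cases hst : (s, t) ∈ I₁ ×ˢ I₁ ∪ I₂ ×ˢ I₂
  · rw [if_pos (hΩ.1 hst), hKC, if_pos hst, hC s t hst, add_zero]
  · rw [if_neg (mt hΩ.2 hst), hKC, if_neg hst, add_sub_cancel_left]

lemma isCompletion_serrated_iff (hcover : I₁ ∪ I₂ = univ)
    (hφ : ∀ u v : ↥(I₁ ∩ I₂), KΩ u.1 v.1 = ⟪φ u, φ v⟫)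
    (ha : ∀ s : I, RepIn φ (a s) (fun u : ↥(I₁ ∩ I₂) => KΩ s u.1)) (K : I → I → ℝ) :
    IsCompletion (I₁ ×ˢ I₁ ∪ I₂ ×ˢ I₂) KΩ K ↔
      (∀ p ∈ I₁ ×ˢ I₁ ∪ I₂ ×ˢ I₂, K p.1 p.2 = KΩ p.1 p.2) ∧
        IsCovOn univ (fun s t => K s t - ⟪a s, a t⟫) := by
  refine ⟨fun ⟨hK, hagree⟩ => ⟨hagree, ?_⟩, fun ⟨hagree, hM⟩ => ⟨?_, hagree⟩⟩
  · refine hK.sub_inner_of_rep (e := Subtype.val) (fun _ => mem_univ _) (fun s _ => (ha s).1)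
      (fun s _ u => ?_) fun u v => ?_
    · rw [hagree (s, u) (mem_serrated_of_mem_inter hcover s u.2)]
      exact (ha s).2 u
    · rw [hagree (u, v) (mem_serrated_of_mem_inter hcover u v.2)]
      exact hφ u v
  · exact (hM.add (isCovOn_inner univ a)).congr fun s _ t _ => sub_add_cancel _ _

lemma sub_inner_eq_zero_of_notMem_symmDiff (hcover : I₁ ∪ I₂ = univ)
    (hpc : IsPartialCov (I₁ ×ˢ I₁ ∪ I₂ ×ˢ I₂) KΩ)
    (hφ : ∀ u v : ↥(I₁ ∩ I₂), KΩ u.1 v.1 = ⟪φ u, φ v⟫)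
    (ha : ∀ s : I, RepIn φ (a s) (fun u : ↥(I₁ ∩ I₂) => KΩ s u.1)) {K : I → I → ℝ}
    (hagree : ∀ p ∈ I₁ ×ˢ I₁ ∪ I₂ ×ˢ I₂, K p.1 p.2 = KΩ p.1 p.2) {s t : I}
    (hst : ¬(s ∈ I₁ \ I₂ ∪ I₂ \ I₁ ∧ t ∈ I₁ \ I₂ ∪ I₂ \ I₁)) :
    K s t - ⟪a s, a t⟫ = 0 := by
  rw [sub_eq_zero]
  by_cases hs : s ∈ I₁ \ I₂ ∪ I₂ \ I₁
  · have ht := mem_inter_of_notMem_symmDiff hcover fun ht => hst ⟨hs, ht⟩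
    rw [hagree (s, t) (mem_serrated_of_mem_inter hcover s ht),
      inner_eq_of_mem_inter hφ ha s ⟨t, ht⟩]
  · have hsJ := mem_inter_of_notMem_symmDiff hcover hs
    have hΩ : (s, t) ∈ I₁ ×ˢ I₁ ∪ I₂ ×ˢ I₂ :=
      (mem_serrated_of_mem_inter hcover t hsJ).imp And.symm And.symm
    rw [real_inner_comm, inner_eq_of_mem_inter hφ ha t ⟨s, hsJ⟩, hagree (s, t) hΩ,
      hpc.symm_of_mem_serrated hΩ]

end TwoSerrated

end

theorem characterisation_two_serrated_general {I : Type*} (I₁ I₂ : Set I)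
    (hcover : I₁ ∪ I₂ = univ)
    (KΩ : I → I → ℝ)
    (hpc : IsPartialCov ((I₁ ×ˢ I₁) ∪ (I₂ ×ˢ I₂)) KΩ)
    (H : Type*) [NormedAddCommGroup H] [InnerProductSpace ℝ H]
    (φ : ↥(I₁ ∩ I₂) → H)
    (hφ : ∀ u v : ↥(I₁ ∩ I₂), KΩ u.1 v.1 = ⟪φ u, φ v⟫)
    (a : I → H)
    (ha : ∀ s : I, RepIn φ (a s) (fun u : ↥(I₁ ∩ I₂) => KΩ s u.1))
    (K : I → I → ℝ) :
    IsCompletion ((I₁ ×ˢ I₁) ∪ (I₂ ×ˢ I₂)) KΩ K ↔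
      ∃ C : I → I → ℝ,
        (∀ s t : I,
          K s t = (if (s, t) ∈ (I₁ ×ˢ I₁) ∪ (I₂ ×ˢ I₂) then KΩ s t else ⟪a s, a t⟫)
            + C s t) ∧
        (∀ s t : I, (s ∈ I₁ ∧ t ∈ I₁) ∨ (s ∈ I₂ ∧ t ∈ I₂) → C s t = 0) ∧
        IsCovOn ((I₁ \ I₂) ∪ (I₂ \ I₁))
          (fun s t =>
            if (s ∈ I₁ \ I₂ ∧ t ∈ I₁ \ I₂) ∨ (s ∈ I₂ \ I₁ ∧ t ∈ I₂ \ I₁)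
            then KΩ s t - ⟪a s, a t⟫ else C s t) := by
  rw [isCompletion_serrated_iff hcover hφ ha]
  constructor
  · rintro ⟨hagree, hschur⟩
    set Kstar := fun s t =>
      if (s, t) ∈ (I₁ ×ˢ I₁) ∪ (I₂ ×ˢ I₂) then KΩ s t else ⟪a s, a t⟫
    have hKC : ∀ s t, K s t = Kstar s t + (K s t - Kstar s t) := fun s t => by ring
    have hC : ∀ s t : I, (s ∈ I₁ ∧ t ∈ I₁) ∨ (s ∈ I₂ ∧ t ∈ I₂) → K s t - Kstar s t = 0 :=
      fun s t hst => by rw [sub_eq_zero, hagree (s, t) hst]; exact (if_pos hst).symm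
    exact ⟨fun s t => K s t - Kstar s t, hKC, hC, (hschur.mono (subset_univ _)).congr
      fun s hs t ht => (ite_diagBlocks_eq_sub_inner hKC hC hs ht).symm⟩
  · rintro ⟨C, hKC, hC, hL⟩
    have hagree : ∀ p ∈ (I₁ ×ˢ I₁) ∪ (I₂ ×ˢ I₂), K p.1 p.2 = KΩ p.1 p.2 := fun p hp => by
      rw [hKC, if_pos hp, hC _ _ hp, add_zero]
    refine ⟨hagree, hL.extend_by_zero.congr fun s _ t _ => ?_⟩
    by_cases hst : s ∈ (I₁ \ I₂) ∪ (I₂ \ I₁) ∧ t ∈ (I₁ \ I₂) ∪ (I₂ \ I₁)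
    · rw [if_pos hst, ite_diagBlocks_eq_sub_inner hKC hC hst.1 hst.2]
    · rw [if_neg hst, sub_inner_eq_zero_of_notMem_symmDiff hcover hpc hφ ha hagree hst]

/-- Characterisation of completions in the 2-serrated case: `K` completes `KΩ` iff
`K = K⋆ + C` where `K⋆` is the canonical completion, `C` vanishes on `I₁² ∪ I₂²`, and the
kernel `L` on `[(I₁∖I₂) ∪ (I₂∖I₁)]²` given by the Schur complements `K_{I₁}/K_J`,
`K_{I₂}/K_J` on the diagonal blocks and by `C` on the off-diagonal blocks is a covariance.
Schur complements and the canonical completion are expressed through the feature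
realization `(H, φ)` of `K_J` and representing vectors `a s` of `KΩ(s,·)|_J`. -/
theorem characterisation_two_serrated {I : Type*} (I₁ I₂ : Set I)
    (hcover : I₁ ∪ I₂ = univ) (hne : (I₁ ∩ I₂).Nonempty)
    (KΩ : I → I → ℝ)
    (hpc : IsPartialCov ((I₁ ×ˢ I₁) ∪ (I₂ ×ˢ I₂)) KΩ)
    (H : Type*) [NormedAddCommGroup H] [InnerProductSpace ℝ H]
    (φ : ↥(I₁ ∩ I₂) → H)
    (hφ : ∀ u v : ↥(I₁ ∩ I₂), KΩ u.1 v.1 = ⟪φ u, φ v⟫)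
    (a : I → H)
    (ha : ∀ s : I, RepIn φ (a s) (fun u : ↥(I₁ ∩ I₂) => KΩ s u.1))
    (K : I → I → ℝ) :
    IsCompletion ((I₁ ×ˢ I₁) ∪ (I₂ ×ˢ I₂)) KΩ K ↔
      ∃ C : I → I → ℝ,
        (∀ s t : I,
          K s t = (if (s, t) ∈ (I₁ ×ˢ I₁) ∪ (I₂ ×ˢ I₂) then KΩ s t else ⟪a s, a t⟫)
            + C s t) ∧
        (∀ s t : I, (s ∈ I₁ ∧ t ∈ I₁) ∨ (s ∈ I₂ ∧ t ∈ I₂) → C s t = 0) ∧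
        IsCovOn ((I₁ \ I₂) ∪ (I₂ \ I₁))
          (fun s t =>
            if (s ∈ I₁ \ I₂ ∧ t ∈ I₁ \ I₂) ∨ (s ∈ I₂ \ I₁ ∧ t ∈ I₂ \ I₁)
            then KΩ s t - ⟪a s, a t⟫ else C s t) :=
  characterisation_two_serrated_general I₁ I₂ hcover KΩ hpc H φ hφ a ha K
end
end

section
/- Necessary and sufficient condition for unique completion from a 2-serrated domain: a partial covariance K_Ω on Ω = (I₁×I₁) ∪ (I₂×I₂) with J = I₁ ∩ I₂ admits a unique completion to I = I₁ ∪ I₂ if and only if K_{I₁}/K_J = 0 or K_{I₂}/K_J = 0. -/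
/-! The Schur complement `R s t = K s t - ⟪a s, a t⟫` is positive semidefinite on each `Iᵢ`:
approximate `∑ cᵢ a(tᵢ)` by combinations of features `φ u` and use positivity of `K` on the
enlarged family. It vanishes as soon as one argument lies in `J = I₁ ∩ I₂`, so
`⟪a s, a t⟫ + R|_{I₁} + R|_{I₂}` (restrictions extended by zero) is always a completion.

If `R` vanishes on `I₁ × I₁`, the same positivity statement applies to any completion `K'`, a
covariance on all of `I`: its Schur complement is positive semidefinite on `I` and vanishes on
the diagonal of `I₁`, hence by Cauchy–Schwarz on every row through `I₁`. Every entry off `Ω`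
has an index in `I₁`, so `K'` is forced.
If instead `R p p > 0` for some `p ∈ I₁` and `R q q > 0` for some `q ∈ I₂`, adding the
symmetric rank-two term `(R s p R t q + R s q R t p) / √(R p p R q q)` (factors extended by
zero) preserves positivity by Cauchy–Schwarz, is zero on `Ω`, and gives a second completion. -/

open Set MeasureTheory
open scoped RealInnerProductSpace Classical

noncomputable section

section Kernels

variable {I : Type*}

def kernelPairing (K : I → I → ℝ) {n m : ℕ} (t : Fin n → I) (u : Fin m → I)
    (c : Fin n → ℝ) (d : Fin m → ℝ) : ℝ :=
  ∑ i, ∑ j, c i * d j * K (t i) (u j)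

def kernelQuadForm (K : I → I → ℝ) {n : ℕ} (t : Fin n → I) (c : Fin n → ℝ) : ℝ :=
  kernelPairing K t t c c

def gramKernel {H : Type*} [NormedAddCommGroup H] [InnerProductSpace ℝ H] (x : I → H) :
    I → I → ℝ :=
  fun s t => ⟪x s, x t⟫

def zeroExtend (S : Set I) (K : I → I → ℝ) : I → I → ℝ :=
  fun s t => if s ∈ S ∧ t ∈ S then K s t else 0

def crossTerm (A B : I → I → ℝ) (p q : I) : I → I → ℝ :=
  fun s t => (A s p * B t q + B s q * A t p) / √(A p p * B q q)

lemma kernelPairing_add (K L : I → I → ℝ) {n m : ℕ} (t : Fin n → I) (u : Fin m → I)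
    (c : Fin n → ℝ) (d : Fin m → ℝ) :
    kernelPairing (K + L) t u c d = kernelPairing K t u c d + kernelPairing L t u c d := by
  simp only [kernelPairing, Pi.add_apply, mul_add, Finset.sum_add_distrib]

lemma kernelQuadForm_add (K L : I → I → ℝ) {n : ℕ} (t : Fin n → I) (c : Fin n → ℝ) :
    kernelQuadForm (K + L) t c = kernelQuadForm K t c + kernelQuadForm L t c :=
  kernelPairing_add K L t t c c

lemma kernelQuadForm_append (K : I → I → ℝ) {n m : ℕ} (t : Fin n → I) (u : Fin m → I)
    (c : Fin n → ℝ) (d : Fin m → ℝ) :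
    kernelQuadForm K (Fin.append t u) (Fin.append c d)
      = kernelQuadForm K t c + kernelPairing K t u c d + kernelPairing K u t d c
        + kernelQuadForm K u d := by
  simp only [kernelQuadForm, kernelPairing, Fin.sum_univ_add, Fin.append_left, Fin.append_right,
    Finset.sum_add_distrib]
  ring

lemma kernelPairing_gramKernel {H : Type*} [NormedAddCommGroup H] [InnerProductSpace ℝ H]
    (x : I → H) {n m : ℕ} (t : Fin n → I) (u : Fin m → I) (c : Fin n → ℝ) (d : Fin m → ℝ) :
    kernelPairing (gramKernel x) t u c d = ⟪∑ i, c i • x (t i), ∑ j, d j • x (u j)⟫ := by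
  rw [kernelPairing, sum_inner]
  refine Finset.sum_congr rfl fun i _ => ?_
  rw [inner_sum]
  refine Finset.sum_congr rfl fun j _ => ?_
  rw [real_inner_smul_left, real_inner_smul_right, gramKernel, mul_assoc]

lemma kernelQuadForm_gramKernel {H : Type*} [NormedAddCommGroup H] [InnerProductSpace ℝ H]
    (x : I → H) {n : ℕ} (t : Fin n → I) (c : Fin n → ℝ) :
    kernelQuadForm (gramKernel x) t c = ‖∑ i, c i • x (t i)‖ ^ 2 :=
  (kernelPairing_gramKernel x t t c c).trans (real_inner_self_eq_norm_sq _)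

lemma kernelQuadForm_crossTerm (A B : I → I → ℝ) (p q : I) {n : ℕ} (t : Fin n → I)
    (c : Fin n → ℝ) :
    kernelQuadForm (crossTerm A B p q) t c
      = 2 * ((∑ i, c i * A (t i) p) * (∑ i, c i * B (t i) q)) / √(A p p * B q q) := by
  have expand : ∀ i j, c i * c j * crossTerm A B p q (t i) (t j)
      = (c i * A (t i) p * (c j * B (t j) q) + c j * A (t j) p * (c i * B (t i) q))
        / √(A p p * B q q) := fun i j => by rw [crossTerm]; ring
  simp only [kernelQuadForm, kernelPairing, expand, ← Finset.sum_div, Finset.sum_add_distrib,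
    ← Finset.mul_sum, ← Finset.sum_mul]
  ring

end Kernels

lemma add_add_two_mul_div_sqrt_nonneg {x y g h α β : ℝ} (hx : 0 ≤ x) (hy : 0 ≤ y)
    (hα : 0 ≤ α) (hβ : 0 ≤ β) (hg : g ^ 2 ≤ x * α) (hh : h ^ 2 ≤ y * β) :
    0 ≤ x + y + 2 * (g * h) / √(α * β) := by
  rcases (mul_nonneg hα hβ).eq_or_lt with hαβ | hαβ
  · rw [← hαβ, Real.sqrt_zero, div_zero]
    linarith
  have hS : 0 < √(α * β) := Real.sqrt_pos.2 hαβ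
  have hS2 : √(α * β) ^ 2 = α * β := Real.sq_sqrt hαβ.le
  have hgh : |2 * (g * h)| ≤ (x + y) * √(α * β) := by
    refine abs_le_of_sq_le_sq ?_ (by positivity)
    have hgh2 : (g * h) ^ 2 ≤ x * y * (α * β) := by
      rw [mul_pow]
      calc g ^ 2 * h ^ 2 ≤ (x * α) * (y * β) :=
            mul_le_mul hg hh (sq_nonneg h) (by positivity)
        _ = x * y * (α * β) := by ring
    rw [mul_pow (x + y), hS2]
    nlinarith [mul_nonneg (sq_nonneg (x - y)) hαβ.le]
  have : -(x + y) ≤ 2 * (g * h) / √(α * β) := by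
    rw [le_div_iff₀ hS]
    linarith [neg_abs_le (2 * (g * h))]
  linarith

namespace IsCovOn

variable {I : Type*} {S : Set I} {K : I → I → ℝ}

lemma kernelQuadForm_nonneg (hK : IsCovOn S K) {n : ℕ} {t : Fin n → I} (ht : ∀ i, t i ∈ S)
    (c : Fin n → ℝ) : 0 ≤ kernelQuadForm K t c :=
  hK.2 n t ht c

lemma diag_nonneg (hK : IsCovOn S K) {s : I} (hs : s ∈ S) : 0 ≤ K s s := by
  simpa [kernelQuadForm, kernelPairing] using
    hK.kernelQuadForm_nonneg (t := ![s]) (by simp [hs]) ![1]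

lemma sq_sum_le (hK : IsCovOn S K) {n : ℕ} {t : Fin n → I} (ht : ∀ i, t i ∈ S)
    (c : Fin n → ℝ) {p : I} (hp : p ∈ S) :
    (∑ i, c i * K (t i) p) ^ 2 ≤ kernelQuadForm K t c * K p p := by
  have hquad : ∀ l : ℝ,
      0 ≤ K p p * (l * l) + 2 * (∑ i, c i * K (t i) p) * l + kernelQuadForm K t c := by
    intro l
    have h := hK.kernelQuadForm_nonneg (t := Fin.append t ![p])
      (fun i => Fin.addCases (fun i => by simpa using ht i) (fun _ => by simpa using hp) i)
      (Fin.append c ![l])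
    rw [kernelQuadForm_append] at h
    have hcross : kernelPairing K t ![p] c ![l] = (∑ i, c i * K (t i) p) * l := by
      simp only [kernelPairing, Fin.sum_univ_one, Matrix.cons_val_fin_one, Finset.sum_mul]
      exact Finset.sum_congr rfl fun i _ => by ring
    have hcross' : kernelPairing K ![p] t ![l] c = (∑ i, c i * K (t i) p) * l := by
      simp only [kernelPairing, Fin.sum_univ_one, Matrix.cons_val_fin_one, Finset.sum_mul]
      exact Finset.sum_congr rfl fun i _ => by rw [hK.1 p hp _ (ht i)]; ring
    have hpp : kernelQuadForm K ![p] ![l] = K p p * (l * l) := by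
      simp only [kernelQuadForm, kernelPairing, Fin.sum_univ_one, Matrix.cons_val_fin_one]
      ring
    linarith
  have := discrim_le_zero hquad
  rw [discrim] at this
  nlinarith

lemma sq_le_mul (hK : IsCovOn S K) {s t : I} (hs : s ∈ S) (ht : t ∈ S) :
    K s t ^ 2 ≤ K s s * K t t := by
  simpa [kernelQuadForm, kernelPairing] using hK.sq_sum_le (t := ![s]) (by simp [hs]) ![1] ht

lemma eq_zero_of_diag_eq_zero (hK : IsCovOn S K) {s t : I} (hs : s ∈ S) (ht : t ∈ S)
    (h : K s s = 0) : K s t = 0 := by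
  have := hK.sq_le_mul hs ht
  rw [h, zero_mul] at this
  exact pow_eq_zero_iff two_ne_zero |>.1 (le_antisymm this (sq_nonneg _))

lemma exists_diag_pos_of_ne_zero (hK : IsCovOn S K) {s t : I} (hs : s ∈ S) (ht : t ∈ S)
    (h : K s t ≠ 0) : ∃ p ∈ S, 0 < K p p :=
  ⟨s, hs, (hK.diag_nonneg hs).lt_of_ne' fun h0 => h (hK.eq_zero_of_diag_eq_zero hs ht h0)⟩

lemma add_s8 {L : I → I → ℝ} (hK : IsCovOn S K) (hL : IsCovOn S L) : IsCovOn S (K + L) := by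
  refine ⟨fun s hs t ht => ?_, fun n t ht c => ?_⟩
  · simp only [Pi.add_apply, hK.1 s hs t ht, hL.1 s hs t ht]
  · change 0 ≤ kernelQuadForm (K + L) t c
    rw [kernelQuadForm_add]
    exact add_nonneg (hK.kernelQuadForm_nonneg ht c) (hL.kernelQuadForm_nonneg ht c)

lemma zeroExtend (hK : IsCovOn S K) : IsCovOn univ (zeroExtend S K) := by
  refine ⟨fun s _ t _ => ?_, fun n t _ c => ?_⟩
  · unfold _root_.zeroExtend
    by_cases h : s ∈ S ∧ t ∈ S
    · rw [if_pos h, if_pos h.symm, hK.1 s h.1 t h.2]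
    · rw [if_neg h, if_neg fun h' => h h'.symm]
  rcases S.eq_empty_or_nonempty with rfl | ⟨s₀, hs₀⟩
  · simp [_root_.zeroExtend]
  let t' : Fin n → I := fun i => if t i ∈ S then t i else s₀
  let c' : Fin n → ℝ := fun i => if t i ∈ S then c i else 0
  have h : kernelQuadForm (_root_.zeroExtend S K) t c = kernelQuadForm K t' c' := by
    unfold kernelQuadForm kernelPairing
    refine Finset.sum_congr rfl fun i _ => Finset.sum_congr rfl fun j _ => ?_
    by_cases hi : t i ∈ S <;> by_cases hj : t j ∈ S <;> simp [_root_.zeroExtend, t', c', hi, hj]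
  change 0 ≤ kernelQuadForm (_root_.zeroExtend S K) t c
  rw [h]
  exact hK.kernelQuadForm_nonneg (t := t')
    (fun i => by by_cases hi : t i ∈ S <;> simp [t', hi, hs₀]) c'

lemma add_add_crossTerm {A B : I → I → ℝ} (hA : IsCovOn S A) (hB : IsCovOn S B) {p q : I}
    (hp : p ∈ S) (hq : q ∈ S) : IsCovOn S (A + B + crossTerm A B p q) := by
  refine ⟨fun s hs t ht => ?_, fun n t ht c => ?_⟩
  · simp only [Pi.add_apply, crossTerm, hA.1 s hs t ht, hB.1 s hs t ht]
    ring
  · change 0 ≤ kernelQuadForm _ t c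
    rw [kernelQuadForm_add, kernelQuadForm_add, kernelQuadForm_crossTerm]
    exact add_add_two_mul_div_sqrt_nonneg (hA.kernelQuadForm_nonneg ht c)
      (hB.kernelQuadForm_nonneg ht c)
      (hA.diag_nonneg hp) (hB.diag_nonneg hq) (hA.sq_sum_le ht c hp) (hB.sq_sum_le ht c hq)

end IsCovOn

lemma isCovOn_gramKernel {I H : Type*} [NormedAddCommGroup H] [InnerProductSpace ℝ H]
    (S : Set I) (x : I → H) : IsCovOn S (gramKernel x) :=
  ⟨fun s _ t _ => real_inner_comm _ _, fun n t _ c => by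
    change 0 ≤ kernelQuadForm _ t c
    rw [kernelQuadForm_gramKernel]
    positivity⟩

section SchurComplement

variable {I H : Type*} [NormedAddCommGroup H] [InnerProductSpace ℝ H]

def schurCompl (K : I → I → ℝ) (a : I → H) : I → I → ℝ :=
  K - gramKernel a

lemma schurCompl_add_gramKernel (K : I → I → ℝ) (a : I → H) :
    schurCompl K a + gramKernel a = K :=
  sub_add_cancel K (gramKernel a)

lemma schurCompl_eq_zero_iff {K : I → I → ℝ} {a : I → H} {s t : I} :
    schurCompl K a s t = 0 ↔ K s t = ⟪a s, a t⟫ :=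
  sub_eq_zero

lemma eq_of_inner_eq_of_mem_closure_span {ι : Type*} {φ : ι → H} {x y : H}
    (hx : x ∈ (Submodule.span ℝ (range φ)).topologicalClosure)
    (hy : y ∈ (Submodule.span ℝ (range φ)).topologicalClosure)
    (h : ∀ i, ⟪x, φ i⟫ = ⟪y, φ i⟫) : x = y := by
  have hle : (Submodule.span ℝ (range φ)).topologicalClosure ≤ (ℝ ∙ (x - y))ᗮ :=
    Submodule.topologicalClosure_minimal _
      (Submodule.span_le.2 <| range_subset_iff.2 fun i =>
        Submodule.mem_orthogonal_singleton_iff_inner_right.2 (by rw [inner_sub_left, h, sub_self]))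
      (Submodule.isClosed_orthogonal _)
  have hself := Submodule.mem_orthogonal_singleton_iff_inner_right.1 (hle (sub_mem hx hy))
  rwa [inner_self_eq_zero, sub_eq_zero] at hself

lemma RepIn.mem_topologicalClosure {J : Type*} {φ : J → H} {x : H} {f : J → ℝ}
    (h : RepIn φ x f) : x ∈ (Submodule.span ℝ (range φ)).topologicalClosure := by
  rw [← SetLike.mem_coe, Submodule.topologicalClosure_coe]
  exact h.1

lemma RepIn.eq_of_inner {J : Type*} {φ : J → H} {x : H} {u : J}
    (h : RepIn φ x fun v => ⟪φ u, φ v⟫) : x = φ u :=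
  eq_of_inner_eq_of_mem_closure_span h.mem_topologicalClosure
    (Submodule.le_topologicalClosure _ (Submodule.subset_span ⟨u, rfl⟩))
    fun v => (h.2 v).symm

variable {S T : Set I} {K : I → I → ℝ} {φ : T → H} {a : I → H}

lemma apply_eq_of_repIn (hφ : ∀ u v : T, K u v = ⟪φ u, φ v⟫)
    (ha : ∀ u : T, RepIn φ (a u) fun v : T => K u v) (u : T) : a u = φ u :=
  RepIn.eq_of_inner (by simpa only [hφ] using ha u)

lemma IsCovOn.schurCompl_eq_zero (hK : IsCovOn S K) (hTS : T ⊆ S)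
    (hφ : ∀ u v : T, K u v = ⟪φ u, φ v⟫) (ha : ∀ s ∈ S, RepIn φ (a s) fun u : T => K s u)
    (u : T) {s : I} (hs : s ∈ S) : schurCompl K a u s = 0 := by
  have hsu : K s u = ⟪a s, φ u⟫ := (ha s hs).2 u
  rw [schurCompl_eq_zero_iff, hK.1 _ (hTS u.2) s hs, hsu,
    apply_eq_of_repIn hφ (fun u => ha u (hTS u.2)), real_inner_comm]

lemma IsCovOn.schurCompl_symm (hK : IsCovOn S K) {s t : I} (hs : s ∈ S) (ht : t ∈ S) :
    schurCompl K a s t = schurCompl K a t s := by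
  simp only [schurCompl, Pi.sub_apply, gramKernel, hK.1 s hs t ht, real_inner_comm]

lemma IsCovOn.kernelQuadForm_schurCompl_add_norm_sq_nonneg (hK : IsCovOn S K) (hTS : T ⊆ S)
    (hφ : ∀ u v : T, K u v = ⟪φ u, φ v⟫) (ha : ∀ s ∈ S, RepIn φ (a s) fun u : T => K s u)
    {n : ℕ} {t : Fin n → I} (ht : ∀ i, t i ∈ S) (c : Fin n → ℝ) {w : H}
    (hw : w ∈ Submodule.span ℝ (range φ)) :
    0 ≤ kernelQuadForm (schurCompl K a) t c + ‖∑ i, c i • a (t i) - w‖ ^ 2 := by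
  have hzero := hK.schurCompl_eq_zero hTS hφ ha
  obtain ⟨m, d, w', rfl⟩ := Submodule.mem_span_set'.1 hw
  choose u hu using fun k => (w' k).2
  -- `K` is positive semidefinite on `t` joined with the points of `T` behind `w`, and the
  -- Schur complement vanishes on every pair involving one of those points
  have h := hK.kernelQuadForm_nonneg (t := Fin.append t fun k => (u k).1)
    (fun i => Fin.addCases (fun i => by simpa using ht i)
      (fun k => by simpa using hTS (u k).2) i) (Fin.append c (-d))
  rw [← schurCompl_add_gramKernel K a, kernelQuadForm_add, kernelQuadForm_append,
    kernelQuadForm_gramKernel] at h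
  have hcross : kernelPairing (schurCompl K a) t (fun k => (u k).1) c (-d) = 0 :=
    Finset.sum_eq_zero fun i _ => Finset.sum_eq_zero fun k _ => by
      rw [hK.schurCompl_symm (ht i) (hTS (u k).2), hzero (u k) (ht i), mul_zero]
  have hcross' : kernelPairing (schurCompl K a) (fun k => (u k).1) t (-d) c = 0 :=
    Finset.sum_eq_zero fun k _ => Finset.sum_eq_zero fun i _ => by
      rw [hzero (u k) (ht i), mul_zero]
  have hT : kernelQuadForm (schurCompl K a) (fun k => (u k).1) (-d) = 0 := by
    rw [kernelQuadForm]
    exact Finset.sum_eq_zero fun k _ => Finset.sum_eq_zero fun l _ => by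
      rw [hzero (u k) (hTS (u l).2), mul_zero]
  have hsum : ∑ i, Fin.append c (-d) i • a (Fin.append t (fun k => (u k).1) i)
      = ∑ i, c i • a (t i) - ∑ k, d k • (w' k : H) := by
    simp only [Fin.sum_univ_add, Fin.append_left, Fin.append_right, Pi.neg_apply, neg_smul,
      Finset.sum_neg_distrib, ← sub_eq_add_neg, apply_eq_of_repIn hφ (fun u => ha u (hTS u.2)),
      hu]
  rwa [hcross, hcross', hT, hsum, add_zero, add_zero, add_zero] at h

theorem IsCovOn.schurCompl (hK : IsCovOn S K) (hTS : T ⊆ S)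
    (hφ : ∀ u v : T, K u v = ⟪φ u, φ v⟫) (ha : ∀ s ∈ S, RepIn φ (a s) fun u : T => K s u) :
    IsCovOn S (schurCompl K a) := by
  refine ⟨fun s hs t ht => hK.schurCompl_symm hs ht, fun n t ht c => ?_⟩
  have hv : ∑ i, c i • a (t i) ∈ (Submodule.span ℝ (range φ)).topologicalClosure :=
    Submodule.sum_mem _ fun i _ =>
      Submodule.smul_mem _ _ (ha (t i) (ht i)).mem_topologicalClosure
  rw [← SetLike.mem_coe, Submodule.topologicalClosure_coe] at hv
  have hclosed : IsClosed
      {w | 0 ≤ kernelQuadForm (_root_.schurCompl K a) t c + ‖∑ i, c i • a (t i) - w‖ ^ 2} :=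
    isClosed_le continuous_const (by fun_prop)
  have h : 0 ≤ kernelQuadForm (_root_.schurCompl K a) t c
      + ‖∑ i, c i • a (t i) - ∑ i, c i • a (t i)‖ ^ 2 := closure_minimal
    (fun w hw => hK.kernelQuadForm_schurCompl_add_norm_sq_nonneg hTS hφ ha ht c hw) hclosed hv
  rwa [sub_self, norm_zero, zero_pow two_ne_zero, add_zero] at h

end SchurComplement

section Serrated

variable {I H : Type*} [NormedAddCommGroup H] [InnerProductSpace ℝ H]
  {I₁ I₂ : Set I} {K : I → I → ℝ} {a : I → H}

def canonicalCompletion (I₁ I₂ : Set I) (K : I → I → ℝ) (a : I → H) : I → I → ℝ :=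
  gramKernel a + zeroExtend I₁ (schurCompl K a) + zeroExtend I₂ (schurCompl K a)

def perturbedCompletion (I₁ I₂ : Set I) (K : I → I → ℝ) (a : I → H) (p q : I) :
    I → I → ℝ :=
  canonicalCompletion I₁ I₂ K a +
    crossTerm (zeroExtend I₁ (schurCompl K a)) (zeroExtend I₂ (schurCompl K a)) p q

lemma zeroExtend_apply_eq_zero {S : Set I} {R : I → I → ℝ} {s t : I} (h : s ∈ S → R s t = 0) :
    zeroExtend S R s t = 0 := by
  unfold zeroExtend
  split_ifs with hst
  exacts [h hst.1, rfl]

lemma canonicalCompletion_eq_of_mem (hJ : ∀ u ∈ I₁ ∩ I₂, ∀ s, schurCompl K a u s = 0)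
    {s t : I} (hst : (s, t) ∈ (I₁ ×ˢ I₁) ∪ (I₂ ×ˢ I₂)) :
    canonicalCompletion I₁ I₂ K a s t = K s t := by
  have hK : gramKernel a s t + schurCompl K a s t = K s t := by
    rw [add_comm]
    exact congrFun (congrFun (schurCompl_add_gramKernel K a) s) t
  simp only [canonicalCompletion, Pi.add_apply]
  rcases hst with ⟨hs, ht⟩ | ⟨hs, ht⟩
  · rw [zeroExtend_apply_eq_zero fun h => hJ s ⟨hs, h⟩ t, zeroExtend, if_pos ⟨hs, ht⟩, add_zero,
      hK]
  · rw [zeroExtend_apply_eq_zero fun h => hJ s ⟨h, hs⟩ t, zeroExtend, if_pos ⟨hs, ht⟩, add_zero,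
      hK]

lemma crossTerm_eq_zero_of_mem (hJ : ∀ u ∈ I₁ ∩ I₂, ∀ s, schurCompl K a u s = 0) (p q : I)
    {s t : I} (hst : (s, t) ∈ (I₁ ×ˢ I₁) ∪ (I₂ ×ˢ I₂)) :
    crossTerm (zeroExtend I₁ (schurCompl K a)) (zeroExtend I₂ (schurCompl K a)) p q s t = 0 := by
  rw [crossTerm, div_eq_zero_iff]
  left
  rcases hst with ⟨hs, ht⟩ | ⟨hs, ht⟩
  · rw [zeroExtend_apply_eq_zero fun h => hJ s ⟨hs, h⟩ q,
      zeroExtend_apply_eq_zero fun h => hJ t ⟨ht, h⟩ q, mul_zero, zero_mul, add_zero]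
  · rw [zeroExtend_apply_eq_zero fun h => hJ s ⟨h, hs⟩ p,
      zeroExtend_apply_eq_zero fun h => hJ t ⟨h, ht⟩ p, mul_zero, zero_mul, add_zero]

lemma isCompletion_canonicalCompletion (h₁ : IsCovOn I₁ (schurCompl K a))
    (h₂ : IsCovOn I₂ (schurCompl K a)) (hJ : ∀ u ∈ I₁ ∩ I₂, ∀ s, schurCompl K a u s = 0) :
    IsCompletion ((I₁ ×ˢ I₁) ∪ (I₂ ×ˢ I₂)) K (canonicalCompletion I₁ I₂ K a) :=
  ⟨((isCovOn_gramKernel univ a).add_s8 h₁.zeroExtend).add_s8 h₂.zeroExtend,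
    fun _ hz => canonicalCompletion_eq_of_mem hJ hz⟩

lemma isCompletion_perturbedCompletion (h₁ : IsCovOn I₁ (schurCompl K a))
    (h₂ : IsCovOn I₂ (schurCompl K a)) (hJ : ∀ u ∈ I₁ ∩ I₂, ∀ s, schurCompl K a u s = 0)
    (p q : I) :
    IsCompletion ((I₁ ×ˢ I₁) ∪ (I₂ ×ˢ I₂)) K (perturbedCompletion I₁ I₂ K a p q) := by
  refine ⟨?_, fun z hz => ?_⟩
  · have := (isCovOn_gramKernel univ a).add_s8
      (h₁.zeroExtend.add_add_crossTerm h₂.zeroExtend (mem_univ p) (mem_univ q))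
    simpa only [perturbedCompletion, canonicalCompletion, add_assoc] using this
  · rw [perturbedCompletion, Pi.add_apply, Pi.add_apply, canonicalCompletion_eq_of_mem hJ hz,
      crossTerm_eq_zero_of_mem hJ p q hz, add_zero]

lemma canonicalCompletion_ne_perturbedCompletion
    (hJ : ∀ u ∈ I₁ ∩ I₂, ∀ s, schurCompl K a u s = 0) {p q : I} (hp : p ∈ I₁) (hq : q ∈ I₂)
    (hpp : 0 < schurCompl K a p p) (hqq : 0 < schurCompl K a q q) :
    canonicalCompletion I₁ I₂ K a ≠ perturbedCompletion I₁ I₂ K a p q := by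
  intro h
  have hp₂ : p ∉ I₂ := fun hp₂ => hpp.ne' (hJ p ⟨hp, hp₂⟩ p)
  have hpq := congrFun (congrFun h p) q
  rw [perturbedCompletion, Pi.add_apply, Pi.add_apply, left_eq_add] at hpq
  refine hpq.not_gt ?_
  simp only [crossTerm, zeroExtend, hp, hq, hp₂, and_self, false_and, if_true, if_false,
    zero_mul, add_zero]
  positivity

lemma not_existsUnique_completion (h₁ : IsCovOn I₁ (schurCompl K a))
    (h₂ : IsCovOn I₂ (schurCompl K a)) (hJ : ∀ u ∈ I₁ ∩ I₂, ∀ s, schurCompl K a u s = 0)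
    {p q : I} (hp : p ∈ I₁) (hq : q ∈ I₂)
    (hpp : 0 < schurCompl K a p p) (hqq : 0 < schurCompl K a q q) :
    ¬∃! K', IsCompletion ((I₁ ×ˢ I₁) ∪ (I₂ ×ˢ I₂)) K K' := fun h =>
  canonicalCompletion_ne_perturbedCompletion hJ hp hq hpp hqq <|
    h.unique (isCompletion_canonicalCompletion h₁ h₂ hJ)
      (isCompletion_perturbedCompletion h₁ h₂ hJ p q)

end Serrated

section Uniqueness

variable {I H : Type*} [NormedAddCommGroup H] [InnerProductSpace ℝ H]
  {I₁ I₂ : Set I} {K K' : I → I → ℝ} {φ : ↥(I₁ ∩ I₂) → H} {a : I → H}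

lemma mk_mem_serrated_of_mem_inter (hcover : I₁ ∪ I₂ = univ) (s : I) {u : I}
    (hu : u ∈ I₁ ∩ I₂) : (s, u) ∈ (I₁ ×ˢ I₁) ∪ (I₂ ×ˢ I₂) := by
  rcases (hcover ▸ mem_univ s : s ∈ I₁ ∪ I₂) with hs | hs
  exacts [.inl ⟨hs, hu.1⟩, .inr ⟨hs, hu.2⟩]

lemma mk_self_mem_serrated (hcover : I₁ ∪ I₂ = univ) (s : I) :
    (s, s) ∈ (I₁ ×ˢ I₁) ∪ (I₂ ×ˢ I₂) := by
  rcases (hcover ▸ mem_univ s : s ∈ I₁ ∪ I₂) with hs | hs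
  exacts [.inl ⟨hs, hs⟩, .inr ⟨hs, hs⟩]

lemma IsCompletion.apply_eq_inner_of_schurCompl_self_eq_zero (hcover : I₁ ∪ I₂ = univ)
    (hφ : ∀ u v : ↥(I₁ ∩ I₂), K u.1 v.1 = ⟪φ u, φ v⟫)
    (ha : ∀ s : I, RepIn φ (a s) (fun u : ↥(I₁ ∩ I₂) => K s u.1))
    (hK' : IsCompletion ((I₁ ×ˢ I₁) ∪ (I₂ ×ˢ I₂)) K K') {s : I}
    (hs : schurCompl K a s s = 0) (t : I) : K' s t = ⟪a s, a t⟫ := by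
  have hK'J : ∀ s, ∀ u : ↥(I₁ ∩ I₂), K' s u = K s u := fun s u =>
    hK'.2 _ (mk_mem_serrated_of_mem_inter hcover s u.2)
  have hR' : IsCovOn univ (schurCompl K' a) := by
    refine hK'.1.schurCompl (subset_univ _) (fun u v => by rw [hK'J]; exact hφ u v)
      fun s _ => ?_
    simpa only [← hK'J] using ha s
  have hs' : schurCompl K' a s s = 0 := by
    rwa [schurCompl_eq_zero_iff, hK'.2 _ (mk_self_mem_serrated hcover s), ← schurCompl_eq_zero_iff]
  exact schurCompl_eq_zero_iff.1 (hR'.eq_zero_of_diag_eq_zero (mem_univ s) (mem_univ t) hs')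

lemma IsCompletion.eq_of_schurCompl_self_eq_zero {K'' : I → I → ℝ} {A : Set I}
    (hcover : I₁ ∪ I₂ = univ) (hφ : ∀ u v : ↥(I₁ ∩ I₂), K u.1 v.1 = ⟪φ u, φ v⟫)
    (ha : ∀ s : I, RepIn φ (a s) (fun u : ↥(I₁ ∩ I₂) => K s u.1))
    (hA : A = I₁ ∨ A = I₂) (hR : ∀ s ∈ A, schurCompl K a s s = 0)
    (hK' : IsCompletion ((I₁ ×ˢ I₁) ∪ (I₂ ×ˢ I₂)) K K')
    (hK'' : IsCompletion ((I₁ ×ˢ I₁) ∪ (I₂ ×ˢ I₂)) K K'') : K' = K'' := by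
  funext s t
  have hcases : s ∈ A ∨ t ∈ A ∨ (s, t) ∈ (I₁ ×ˢ I₁) ∪ (I₂ ×ˢ I₂) := by
    have hs : s ∈ I₁ ∪ I₂ := hcover ▸ mem_univ s
    have ht : t ∈ I₁ ∪ I₂ := hcover ▸ mem_univ t
    simp only [mem_union, mem_prod] at hs ht ⊢
    rcases hA with rfl | rfl <;> tauto
  rcases hcases with hs | ht | hst
  · rw [hK'.apply_eq_inner_of_schurCompl_self_eq_zero hcover hφ ha (hR s hs),
      hK''.apply_eq_inner_of_schurCompl_self_eq_zero hcover hφ ha (hR s hs)]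
  · rw [hK'.1.1 s (mem_univ s) t (mem_univ t), hK''.1.1 s (mem_univ s) t (mem_univ t),
      hK'.apply_eq_inner_of_schurCompl_self_eq_zero hcover hφ ha (hR t ht),
      hK''.apply_eq_inner_of_schurCompl_self_eq_zero hcover hφ ha (hR t ht)]
  · rw [hK'.2 _ hst, hK''.2 _ hst]

end Uniqueness

theorem unique_completion_iff_schur_zero_general {I : Type*} (I₁ I₂ : Set I)
    (hcover : I₁ ∪ I₂ = univ)
    (KΩ : I → I → ℝ)
    (hpc : IsPartialCov ((I₁ ×ˢ I₁) ∪ (I₂ ×ˢ I₂)) KΩ)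
    (H : Type*) [NormedAddCommGroup H] [InnerProductSpace ℝ H]
    (φ : ↥(I₁ ∩ I₂) → H)
    (hφ : ∀ u v : ↥(I₁ ∩ I₂), KΩ u.1 v.1 = ⟪φ u, φ v⟫)
    (a : I → H)
    (ha : ∀ s : I, RepIn φ (a s) (fun u : ↥(I₁ ∩ I₂) => KΩ s u.1)) :
    (∃! K : I → I → ℝ, IsCompletion ((I₁ ×ˢ I₁) ∪ (I₂ ×ˢ I₂)) KΩ K) ↔
      ((∀ s ∈ I₁, ∀ t ∈ I₁, KΩ s t = ⟪a s, a t⟫) ∨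
       (∀ s ∈ I₂, ∀ t ∈ I₂, KΩ s t = ⟪a s, a t⟫)) := by
  have hK₁ : IsCovOn I₁ KΩ := hpc I₁ subset_union_left
  have hK₂ : IsCovOn I₂ KΩ := hpc I₂ subset_union_right
  have hR₁ := hK₁.schurCompl inter_subset_left hφ fun s _ => ha s
  have hR₂ := hK₂.schurCompl inter_subset_right hφ fun s _ => ha s
  have hJ : ∀ u ∈ I₁ ∩ I₂, ∀ s, schurCompl KΩ a u s = 0 := fun u hu s =>
    (hcover ▸ mem_univ s : s ∈ I₁ ∪ I₂).elim
      (hK₁.schurCompl_eq_zero inter_subset_left hφ (fun s _ => ha s) ⟨u, hu⟩)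
      (hK₂.schurCompl_eq_zero inter_subset_right hφ (fun s _ => ha s) ⟨u, hu⟩)
  simp only [← schurCompl_eq_zero_iff]
  constructor
  · intro huniq
    by_contra! h
    obtain ⟨⟨s₁, hs₁, t₁, ht₁, h₁⟩, ⟨s₂, hs₂, t₂, ht₂, h₂⟩⟩ := h
    obtain ⟨p, hp, hpp⟩ := hR₁.exists_diag_pos_of_ne_zero hs₁ ht₁ h₁
    obtain ⟨q, hq, hqq⟩ := hR₂.exists_diag_pos_of_ne_zero hs₂ ht₂ h₂
    exact not_existsUnique_completion hR₁ hR₂ hJ hp hq hpp hqq huniq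
  · intro h
    have hK₀ := isCompletion_canonicalCompletion hR₁ hR₂ hJ
    refine ⟨_, hK₀, fun K' hK' => ?_⟩
    rcases h with h | h
    · exact hK'.eq_of_schurCompl_self_eq_zero hcover hφ ha (.inl rfl) (fun s hs => h s hs s hs) hK₀
    · exact hK'.eq_of_schurCompl_self_eq_zero hcover hφ ha (.inr rfl) (fun s hs => h s hs s hs) hK₀

/-- Unique completion from a 2-serrated domain iff a Schur complement vanishes:
`KΩ` on `Ω = (I₁×I₁) ∪ (I₂×I₂)` admits a unique completion iff `K_{I₁}/K_J = 0` or
`K_{I₂}/K_J = 0`, where `(K_{I_i}/K_J)(s,t) = KΩ(s,t) − ⟨KΩ(s,·)|_J, KΩ(·,t)|_J⟩_{ℋ(K_J)}`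
is expressed via the feature realization `(H, φ)` of `K_J` and representing vectors `a`. -/
theorem unique_completion_iff_schur_zero {I : Type*} (I₁ I₂ : Set I)
    (hcover : I₁ ∪ I₂ = univ) (hne : (I₁ ∩ I₂).Nonempty)
    (KΩ : I → I → ℝ)
    (hpc : IsPartialCov ((I₁ ×ˢ I₁) ∪ (I₂ ×ˢ I₂)) KΩ)
    (H : Type*) [NormedAddCommGroup H] [InnerProductSpace ℝ H]
    (φ : ↥(I₁ ∩ I₂) → H)
    (hφ : ∀ u v : ↥(I₁ ∩ I₂), KΩ u.1 v.1 = ⟪φ u, φ v⟫)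
    (a : I → H)
    (ha : ∀ s : I, RepIn φ (a s) (fun u : ↥(I₁ ∩ I₂) => KΩ s u.1)) :
    (∃! K : I → I → ℝ, IsCompletion ((I₁ ×ˢ I₁) ∪ (I₂ ×ˢ I₂)) KΩ K) ↔
      ((∀ s ∈ I₁, ∀ t ∈ I₁, KΩ s t = ⟪a s, a t⟫) ∨
       (∀ s ∈ I₂, ∀ t ∈ I₂, KΩ s t = ⟪a s, a t⟫)) :=
  unique_completion_iff_schur_zero_general I₁ I₂ hcover KΩ hpc H φ hφ a ha
end
end
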